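/- arXiv:2401.01112 — 6 statements merged into one kernel-verified Lean document; each statement's English description precedes it below -/
import Mathlib

section
/- Let θ ∈ [0,1] and τ > 0 satisfy L₁θτ < 2, suppose Assumption A1 holds, and suppose b is continuous. Then the map b̂(x) := x − θτ b(x) is a bijection from ℝ^d onto ℝ^d; in particular, for every z ∈ ℝ^d the implicit equation y − θτ b(y) = z has a unique solution y ∈ ℝ^d. -/
open MeasureTheory Filter Topology
local notation "⟪" x ", " y "⟫" => @inner ℝ _ _ x y

/-- 1D: a strongly monotone continuous real function is surjective. -/
lemma surj_one_dim (g : ℝ → ℝ) (κ : ℝ) (hκ : 0 < κ) (hg : Continuous g)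
    (hmono : ∀ s t : ℝ, κ * (t - s) ^ 2 ≤ (g t - g s) * (t - s)) :
    ∀ c : ℝ, ∃ t, g t = c := by
  intro c
  set R : ℝ := |c - g 0| / κ with hRdef
  have hR0 : 0 ≤ R := div_nonneg (abs_nonneg _) hκ.le
  have hκR : κ * R = |c - g 0| := by
    rw [hRdef]; field_simp
  have habs : c - g 0 ≤ |c - g 0| := le_abs_self _
  have habs' : -(|c - g 0|) ≤ c - g 0 := neg_abs_le _
  have hup : c ≤ g R := by
    rcases eq_or_lt_of_le hR0 with h0 | h0
    · have : |c - g 0| = 0 := by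
        rw [← hκR, ← h0]; ring
      have := abs_eq_zero.mp this
      rw [← h0]; linarith
    · have h := hmono 0 R
      nlinarith
  have hlow : g (-R) ≤ c := by
    rcases eq_or_lt_of_le hR0 with h0 | h0
    · have : |c - g 0| = 0 := by
        rw [← hκR, ← h0]; ring
      have := abs_eq_zero.mp this
      rw [← h0]; simpa using by linarith
    · have h := hmono (-R) 0
      nlinarith
  have hmem : c ∈ Set.Icc (g (-R)) (g R) := ⟨hlow, hup⟩
  have := intermediate_value_Icc (by linarith : -R ≤ R) hg.continuousOn hmem
  obtain ⟨t, _, ht⟩ := this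
  exact ⟨t, ht⟩

/-- A strongly monotone continuous map on a finite-dimensional real inner product
space is surjective (elementary proof by induction on the dimension). -/
lemma strongMono_surjective :
    ∀ (n : ℕ) (E : Type) [NormedAddCommGroup E] [InnerProductSpace ℝ E]
      [FiniteDimensional ℝ E], Module.finrank ℝ E = n →
      ∀ (f : E → E) (κ : ℝ), 0 < κ → Continuous f →
      (∀ x y : E, κ * ‖x - y‖ ^ 2 ≤ ⟪f x - f y, x - y⟫) →
      Function.Surjective f := by
  intro n
  induction n with
  | zero =>
    intro E _ _ _ hrank f κ hκ hf hm z
    have : Subsingleton E := Module.finrank_zero_iff.mp hrank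
    exact ⟨z, Subsingleton.elim _ _⟩
  | succ n ih =>
    intro E _ _ _ hrank f κ hκ hf hm z
    have hnt : Nontrivial E := Module.finrank_pos_iff.mp (by rw [hrank]; omega)
    obtain ⟨v, hv⟩ := exists_ne (0 : E)
    set e : E := ‖v‖⁻¹ • v with hedef
    have he : ‖e‖ = 1 := norm_smul_inv_norm hv
    have he0 : e ≠ 0 := fun h => by simp [h] at he
    have hee : ⟪e, e⟫ = (1 : ℝ) := by
      rw [real_inner_self_eq_norm_sq, he]; norm_num
    set K : Submodule ℝ E := (ℝ ∙ e)ᗮ with hKdef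
    have hKrank : Module.finrank ℝ K = n := by
      have h1 : Module.finrank ℝ (ℝ ∙ e) = 1 := finrank_span_singleton he0
      have h2 := Submodule.finrank_add_finrank_orthogonal (K := (ℝ ∙ e))
      rw [h1, hrank] at h2
      rw [hKdef]
      omega
    -- the 1D sections
    set g : K → ℝ → ℝ := fun a t => ⟪f ((a : E) + t • e) - z, e⟫ with hgdef
    have hXY : ∀ (a : K) (s t : ℝ),
        ((a : E) + t • e) - ((a : E) + s • e) = (t - s) • e := by
      intro a s t
      rw [sub_smul]; abel
    have hgmono : ∀ (a : K) (s t : ℝ), κ * (t - s) ^ 2 ≤ (g a t - g a s) * (t - s) := by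
      intro a s t
      have h := hm ((a : E) + t • e) ((a : E) + s • e)
      rw [hXY a s t] at h
      have hn : ‖(t - s) • e‖ ^ 2 = (t - s) ^ 2 := by
        rw [norm_smul, he, mul_one, Real.norm_eq_abs, sq_abs]
      have hi : ⟪f ((a : E) + t • e) - f ((a : E) + s • e), (t - s) • e⟫
          = (g a t - g a s) * (t - s) := by
        rw [real_inner_smul_right]
        have : g a t - g a s
            = ⟪f ((a : E) + t • e) - f ((a : E) + s • e), e⟫ := by
          simp only [hgdef, inner_sub_left]
          ring
        rw [this]; ring
      rw [hn] at h
      rw [hi] at h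
      exact h
    have hgcont : ∀ a : K, Continuous (g a) := by
      intro a
      apply Continuous.inner
      · exact (hf.comp (continuous_const.add (continuous_id.smul continuous_const))).sub
          continuous_const
      · exact continuous_const
    -- the implicit root function φ
    have hroot : ∀ a : K, ∃ t, g a t = 0 := fun a =>
      surj_one_dim (g a) κ hκ (hgcont a) (hgmono a) 0
    set φ : K → ℝ := fun a => Classical.choose (hroot a) with hφdef
    have hφ : ∀ a : K, g a (φ a) = 0 := fun a => Classical.choose_spec (hroot a)
    have hφlip : ∀ a b : K, κ * |φ a - φ b| ≤ |g a (φ b)| := by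
      intro a b
      have h := hgmono a (φ b) (φ a)
      rw [hφ a] at h
      rcases eq_or_ne (φ a - φ b) 0 with h0 | h0
      · rw [h0]; simp [abs_nonneg]
      · have habs : (0 - g a (φ b)) * (φ a - φ b) ≤ |g a (φ b)| * |φ a - φ b| := by
          calc (0 - g a (φ b)) * (φ a - φ b) ≤ |(0 - g a (φ b)) * (φ a - φ b)| :=
                le_abs_self _
            _ = |g a (φ b)| * |φ a - φ b| := by rw [abs_mul]; simp
        have h2 : κ * (φ a - φ b) ^ 2 ≤ |g a (φ b)| * |φ a - φ b| := le_trans h habs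
        have h3 : (φ a - φ b) ^ 2 = |φ a - φ b| ^ 2 := (sq_abs _).symm
        rw [h3] at h2
        have h4 : 0 < |φ a - φ b| := abs_pos.mpr h0
        nlinarith
    have hφcont : Continuous φ := by
      rw [continuous_iff_continuousAt]
      intro b
      have hGb : Continuous (fun a : K => |g a (φ b)| / κ) := by
        apply Continuous.div_const
        apply Continuous.abs
        apply Continuous.inner
        · exact (hf.comp ((continuous_subtype_val).add continuous_const)).sub
            continuous_const
        · exact continuous_const
      have hbound : ∀ a : K, |φ a - φ b| ≤ |g a (φ b)| / κ := fun a =>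
        (le_div_iff₀ hκ).mpr (by rw [mul_comm]; exact hφlip a b)
      have hg0 : Tendsto (fun a : K => |g a (φ b)| / κ) (𝓝 b) (𝓝 0) := by
        have h0 : Tendsto (fun a : K => |g a (φ b)| / κ) (𝓝 b)
            (𝓝 (|g b (φ b)| / κ)) := hGb.continuousAt
        simpa [hφ b] using h0
      have htend : Tendsto (fun a : K => |φ a - φ b|) (𝓝 b) (𝓝 0) :=
        squeeze_zero (fun a => abs_nonneg _) hbound hg0
      rw [ContinuousAt, tendsto_iff_dist_tendsto_zero]
      simpa [Real.dist_eq] using htend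
    -- the reduced map F on K
    set F : K → K := fun a => K.orthogonalProjectionOnto (f ((a : E) + φ a • e) - z) with hFdef
    have hFcont : Continuous F := by
      apply (K.orthogonalProjectionOnto).continuous.comp
      exact (hf.comp (continuous_subtype_val.add (hφcont.smul continuous_const))).sub
        continuous_const
    have haK : ∀ a : K, ⟪(a : E), e⟫ = 0 := by
      intro a
      have h2 : (a : E) ∈ (ℝ ∙ e)ᗮ := a.2
      have h3 := (Submodule.mem_orthogonal _ _).mp h2 e (Submodule.mem_span_singleton_self e)
      rwa [real_inner_comm] at h3
    have hFmono : ∀ a b : K, κ * ‖a - b‖ ^ 2 ≤ ⟪F a - F b, a - b⟫ := by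
      intro a b
      set X : E := (a : E) + φ a • e
      set Y : E := (b : E) + φ b • e
      have hXYsub : X - Y = ((a : E) - (b : E)) + (φ a - φ b) • e := by
        simp only [X, Y, sub_smul]; abel
      -- inner in K equals inner in E
      have h1 : (⟪F a - F b, a - b⟫ : ℝ) = ⟪((F a : E) - (F b : E)), ((a : E) - (b : E))⟫ := by
        have h0 : (⟪F a - F b, a - b⟫ : ℝ) = ⟪((F a - F b : K) : E), ((a - b : K) : E)⟫ := rfl
        rw [h0]
        norm_cast
      have hFsub : (F a : E) - (F b : E)
          = (K.orthogonalProjectionOnto ((f X - z) - (f Y - z)) : E) := by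
        simp only [hFdef, map_sub]
        norm_cast
      have hproj : ⟪(K.orthogonalProjectionOnto ((f X - z) - (f Y - z)) : E),
          ((a : E) - (b : E))⟫ = ⟪(f X - z) - (f Y - z), ((a : E) - (b : E))⟫ := by
        have hw : (a : E) - (b : E) ∈ K := K.sub_mem a.2 b.2
        have hmem := Submodule.sub_starProjection_mem_orthogonal (K := K)
          ((f X - z) - (f Y - z))
        rw [Submodule.starProjection_apply] at hmem
        rw [Submodule.mem_orthogonal] at hmem
        have h0 := hmem _ hw
        rw [real_inner_comm, inner_sub_left] at h0
        linarith
      have hfe : ⟪f X - f Y, e⟫ = (0 : ℝ) := by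
        have : (⟪f X - f Y, e⟫ : ℝ) = g a (φ a) - g b (φ b) := by
          simp only [hgdef, inner_sub_left]
          ring
        rw [this, hφ a, hφ b]; ring
      have hsimp : (f X - z) - (f Y - z) = f X - f Y := by abel
      have h2 : ⟪f X - f Y, ((a : E) - (b : E))⟫ = ⟪f X - f Y, X - Y⟫ := by
        rw [hXYsub, inner_add_right, real_inner_smul_right, hfe]
        ring
      have h3 : κ * ‖X - Y‖ ^ 2 ≤ ⟪f X - f Y, X - Y⟫ := hm X Y
      have h4 : ‖(a : E) - (b : E)‖ ^ 2 ≤ ‖X - Y‖ ^ 2 := by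
        rw [hXYsub]
        have horth : ⟪(a : E) - (b : E), (φ a - φ b) • e⟫ = 0 := by
          rw [real_inner_smul_right, inner_sub_left, haK a, haK b]
          ring
        rw [norm_add_sq_real, horth]
        nlinarith [norm_nonneg ((φ a - φ b) • e), sq_nonneg ‖(φ a - φ b) • e‖]
      have h5 : ‖a - b‖ ^ 2 = ‖(a : E) - (b : E)‖ ^ 2 := by
        norm_cast
      rw [h1, hFsub, hproj, hsimp, h2, h5]
      nlinarith [h3, h4]
    -- apply induction hypothesis on K
    obtain ⟨a, ha⟩ := ih K hKrank F κ hκ hFcont hFmono 0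
    set X : E := (a : E) + φ a • e with hXdef
    refine ⟨X, ?_⟩
    -- f X - z ∈ Kᗮ = ℝ ∙ e and ⟪f X - z, e⟫ = 0, hence f X = z
    have hP : K.orthogonalProjectionOnto (f X - z) = 0 := ha
    have hmem : f X - z ∈ Kᗮ := by
      have := Submodule.sub_starProjection_mem_orthogonal (K := K) (f X - z)
      rw [Submodule.starProjection_apply, hP] at this
      simpa using this
    have hKorth : Kᗮ = ℝ ∙ e := Submodule.orthogonal_orthogonal _
    rw [hKorth, Submodule.mem_span_singleton] at hmem
    obtain ⟨c, hc⟩ := hmem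
    have hge : ⟪f X - z, e⟫ = (0 : ℝ) := hφ a
    rw [← hc, real_inner_smul_left, hee] at hge
    have : c = 0 := by linarith [hge]
    rw [this, zero_smul] at hc
    have h := hc.symm
    rwa [sub_eq_zero] at h

/-- Squared Frobenius (Hilbert–Schmidt) norm of a real `d × m` matrix. -/
noncomputable def frobSq {d m : ℕ} (M : Matrix (Fin d) (Fin m) ℝ) : ℝ :=
  ∑ i, ∑ j, (M i j) ^ 2

/-- under Assumption A1, continuity of `b`, and `L₁ θ τ < 2`, the map
`b̂(x) = x - θ τ b(x)` is a bijection of `ℝ^d`; in particular every implicit equation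
`y - θ τ b(y) = z` has a unique solution. -/
theorem stm_bhat_bijective {d m : ℕ}
    (b : EuclideanSpace ℝ (Fin d) → EuclideanSpace ℝ (Fin d))
    (σ : EuclideanSpace ℝ (Fin d) → Matrix (Fin d) (Fin m) ℝ)
    (L₁ θ τ : ℝ) (hθ : θ ∈ Set.Icc (0 : ℝ) 1) (hτ : 0 < τ) (hstep : L₁ * θ * τ < 2)
    (hA1 : ∀ x y : EuclideanSpace ℝ (Fin d),
      2 * ⟪b x - b y, x - y⟫ + frobSq (σ x - σ y) ≤ L₁ * ‖x - y‖ ^ 2)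
    (hb : Continuous b) :
    Function.Bijective (fun x : EuclideanSpace ℝ (Fin d) => x - (θ * τ) • b x) ∧
      ∀ z : EuclideanSpace ℝ (Fin d),
        ∃! y : EuclideanSpace ℝ (Fin d), y - (θ * τ) • b y = z := by
  obtain ⟨hθ0, hθ1⟩ := hθ
  set c : ℝ := θ * τ with hcdef
  have hc0 : 0 ≤ c := mul_nonneg hθ0 hτ.le
  set κ : ℝ := 1 - L₁ * c / 2 with hκdef
  have hκpos : 0 < κ := by
    have hLc : L₁ * c = L₁ * θ * τ := by rw [hcdef]; ring
    rw [hκdef]; nlinarith [hstep]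
  set f := fun x : EuclideanSpace ℝ (Fin d) => x - c • b x with hfdef
  have hfrob : ∀ x y, 0 ≤ frobSq (σ x - σ y) := fun x y =>
    Finset.sum_nonneg fun i _ => Finset.sum_nonneg fun j _ => sq_nonneg _
  have hmonob : ∀ x y : EuclideanSpace ℝ (Fin d),
      ⟪b x - b y, x - y⟫ ≤ L₁ / 2 * ‖x - y‖ ^ 2 := by
    intro x y
    have h1 := hA1 x y
    have h2 := hfrob x y
    linarith
  have hm : ∀ x y : EuclideanSpace ℝ (Fin d),
      κ * ‖x - y‖ ^ 2 ≤ ⟪f x - f y, x - y⟫ := by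
    intro x y
    have hexp : (⟪f x - f y, x - y⟫ : ℝ)
        = ‖x - y‖ ^ 2 - c * ⟪b x - b y, x - y⟫ := by
      simp only [hfdef]
      have h1 : (x - c • b x) - (y - c • b y) = (x - y) - c • (b x - b y) := by
        rw [smul_sub]; abel
      rw [h1, inner_sub_left, real_inner_smul_left, real_inner_self_eq_norm_sq]
    have h3 := hmonob x y
    rw [hexp, hκdef]
    nlinarith [mul_le_mul_of_nonneg_left h3 hc0, sq_nonneg ‖x - y‖]
  have hcont : Continuous f := continuous_id.sub (hb.const_smul c)
  have hsurj : Function.Surjective f :=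
    strongMono_surjective (Module.finrank ℝ (EuclideanSpace ℝ (Fin d))) _ rfl f κ
      hκpos hcont hm
  have hinj : Function.Injective f := by
    intro x y hxy
    have h := hm x y
    rw [hxy, sub_self, inner_zero_left] at h
    have h3 : ‖x - y‖ ^ 2 = 0 := le_antisymm (by nlinarith) (sq_nonneg _)
    have h4 : ‖x - y‖ = 0 := by
      have := sq_abs ‖x - y‖
      nlinarith [abs_nonneg ‖x - y‖, norm_nonneg (x - y)]
    exact sub_eq_zero.mp (norm_eq_zero.mp h4)
  refine ⟨⟨hinj, hsurj⟩, ?_⟩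
  intro z
  obtain ⟨y, hy⟩ := hsurj z
  exact ⟨y, hy, fun w hw => hinj (hw.trans hy.symm)⟩
end

section
/- Suppose Assumption A2 holds. Then for any real numbers ρ, β with ρ ≥ β ≥ 0, setting C := (1 + βL₃)/(1 + ρL₃), one has for all x ∈ ℝ^d: |x − β b(x)|² + β L₂ + (Cρ − β)‖σ(x)‖² ≤ C (|x − ρ b(x)|² + ρ L₂). -/
open MeasureTheory Filter
local notation "⟪" x ", " y "⟫" => @inner ℝ _ _ x y

/-- Lemma 3.2: under Assumption A2, for `ρ ≥ β ≥ 0` and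
`C = (1 + β L₃)/(1 + ρ L₃)` one has
`|x - β b(x)|² + β L₂ + (Cρ - β)‖σ(x)‖² ≤ C (|x - ρ b(x)|² + ρ L₂)`. -/
theorem stm_key_inequality {d m : ℕ}
    (b : EuclideanSpace ℝ (Fin d) → EuclideanSpace ℝ (Fin d))
    (σ : EuclideanSpace ℝ (Fin d) → Matrix (Fin d) (Fin m) ℝ)
    (L₂ L₃ : ℝ) (hL₂ : 0 < L₂) (hL₃ : 0 < L₃)
    (hA2 : ∀ x : EuclideanSpace ℝ (Fin d),
      2 * ⟪b x, x⟫ + frobSq (σ x) ≤ L₂ - L₃ * ‖x‖ ^ 2)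
    (ρ β : ℝ) (hβ : 0 ≤ β) (hρβ : β ≤ ρ) :
    ∀ x : EuclideanSpace ℝ (Fin d),
      ‖x - β • b x‖ ^ 2 + β * L₂ +
          ((1 + β * L₃) / (1 + ρ * L₃) * ρ - β) * frobSq (σ x) ≤
        (1 + β * L₃) / (1 + ρ * L₃) * (‖x - ρ • b x‖ ^ 2 + ρ * L₂) := by
  intro x
  have hρ : 0 ≤ ρ := le_trans hβ hρβ
  have hden : 0 < 1 + ρ * L₃ := by nlinarith
  have hS : 0 ≤ frobSq (σ x) := by
    unfold frobSq
    positivity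
  have hN : 0 ≤ ‖b x‖ ^ 2 := sq_nonneg _
  have hA := hA2 x
  have hexp : ∀ t : ℝ, ‖x - t • b x‖ ^ 2
      = ‖x‖ ^ 2 - 2 * t * ⟪b x, x⟫ + t ^ 2 * ‖b x‖ ^ 2 := by
    intro t
    rw [norm_sub_sq_real, real_inner_smul_right, norm_smul, mul_pow,
      Real.norm_eq_abs, sq_abs, real_inner_comm]
    ring
  rw [hexp, hexp]
  have hC : (1 + β * L₃) / (1 + ρ * L₃) * (1 + ρ * L₃) = 1 + β * L₃ :=
    div_mul_cancel₀ _ hden.ne'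
  have hslack : 0 ≤ L₂ - L₃ * ‖x‖ ^ 2 - 2 * ⟪b x, x⟫ - frobSq (σ x) := by linarith
  have key : (1 + ρ * L₃) * (‖x‖ ^ 2 - 2 * β * ⟪b x, x⟫ + β ^ 2 * ‖b x‖ ^ 2 + β * L₂)
      + ((1 + β * L₃) * ρ - β * (1 + ρ * L₃)) * frobSq (σ x)
      ≤ (1 + β * L₃) * (‖x‖ ^ 2 - 2 * ρ * ⟪b x, x⟫ + ρ ^ 2 * ‖b x‖ ^ 2 + ρ * L₂) := by
    nlinarith [mul_nonneg (sub_nonneg.2 hρβ) hslack,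
      mul_nonneg (mul_nonneg (sub_nonneg.2 hρβ)
        (show (0:ℝ) ≤ ρ + β + ρ * β * L₃ by positivity)) hN]
  rw [← sub_nonneg]
  have h2 : (1 + β * L₃) / (1 + ρ * L₃) *
        (‖x‖ ^ 2 - 2 * ρ * ⟪b x, x⟫ + ρ ^ 2 * ‖b x‖ ^ 2 + ρ * L₂)
      - (‖x‖ ^ 2 - 2 * β * ⟪b x, x⟫ + β ^ 2 * ‖b x‖ ^ 2 + β * L₂ +
          ((1 + β * L₃) / (1 + ρ * L₃) * ρ - β) * frobSq (σ x))
      = ((1 + β * L₃) * (‖x‖ ^ 2 - 2 * ρ * ⟪b x, x⟫ + ρ ^ 2 * ‖b x‖ ^ 2 + ρ * L₂)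
        - ((1 + ρ * L₃) * (‖x‖ ^ 2 - 2 * β * ⟪b x, x⟫ + β ^ 2 * ‖b x‖ ^ 2 + β * L₂)
          + ((1 + β * L₃) * ρ - β * (1 + ρ * L₃)) * frobSq (σ x))) / (1 + ρ * L₃) := by
    field_simp
  rw [h2]
  exact div_nonneg (by linarith) hden.le
end

section
/- Suppose Assumption A2 holds, and let θ ∈ (1/2, 1], λ ∈ (0, 2θ−1], τ ∈ (0,1). Then for all x ∈ ℝ^d, V_θ(x) ≥ [1 + (1−θ+λ)L₃τ]|x|² − L₂(1−θ+λ)τ. In particular, V_θ(x) → ∞ as |x| → ∞. -/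
open MeasureTheory Filter
local notation "⟪" x ", " y "⟫" => @inner ℝ _ _ x y

/-- The Lyapunov function `V_θ(x) = |x - (1-θ+λ)τ b(x)|² + (2θ-1-λ)τ‖σ(x)‖² + 1`. -/
noncomputable def Vtheta {d m : ℕ}
    (b : EuclideanSpace ℝ (Fin d) → EuclideanSpace ℝ (Fin d))
    (σ : EuclideanSpace ℝ (Fin d) → Matrix (Fin d) (Fin m) ℝ)
    (θ lam τ : ℝ) (z : EuclideanSpace ℝ (Fin d)) : ℝ :=
  ‖z - ((1 - θ + lam) * τ) • b z‖ ^ 2 + (2 * θ - 1 - lam) * τ * frobSq (σ z) + 1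

/-!
Expanding the square, `V_θ(x) = |x|² - 2α⟨b(x), x⟩ + α²|b(x)|² + (2θ-1-λ)τ‖σ(x)‖² + 1` with
`α = (1-θ+λ)τ ≥ 0`. Multiplying A2 by `α` bounds `-2α⟨b(x), x⟩` below by
`α‖σ(x)‖² + αL₃|x|² - αL₂`, and the two `‖σ(x)‖²` terms combine to `θτ‖σ(x)‖² ≥ 0`.
A quadratic lower bound with positive leading coefficient gives coercivity.
-/

lemma frobSq_nonneg {d m : ℕ} (M : Matrix (Fin d) (Fin m) ℝ) : 0 ≤ frobSq M := by
  unfold frobSq; positivity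

lemma sq_norm_sub_two_mul_inner_le_sq_norm_sub_smul {E : Type*} [NormedAddCommGroup E]
    [InnerProductSpace ℝ E] (x v : E) (α : ℝ) :
    ‖x‖ ^ 2 - 2 * α * ⟪v, x⟫ ≤ ‖x - α • v‖ ^ 2 := by
  rw [norm_sub_sq_real, real_inner_smul_right, real_inner_comm, norm_smul, mul_pow,
    Real.norm_eq_abs, sq_abs]
  nlinarith [mul_nonneg (sq_nonneg α) (sq_nonneg ‖v‖)]

lemma Vtheta_ge_of_coercivity {d m : ℕ}
    {b : EuclideanSpace ℝ (Fin d) → EuclideanSpace ℝ (Fin d)}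
    {σ : EuclideanSpace ℝ (Fin d) → Matrix (Fin d) (Fin m) ℝ} {L₂ L₃ θ lam τ : ℝ}
    {x : EuclideanSpace ℝ (Fin d)} (hA2 : 2 * ⟪b x, x⟫ + frobSq (σ x) ≤ L₂ - L₃ * ‖x‖ ^ 2)
    (hθ₀ : 0 ≤ θ) (hα : 0 ≤ 1 - θ + lam) (hτ : 0 ≤ τ) :
    (1 + (1 - θ + lam) * L₃ * τ) * ‖x‖ ^ 2 - L₂ * (1 - θ + lam) * τ ≤
      Vtheta b σ θ lam τ x := by
  have hexpand := sq_norm_sub_two_mul_inner_le_sq_norm_sub_smul x (b x) ((1 - θ + lam) * τ)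
  have hdrift := mul_le_mul_of_nonneg_left hA2 (mul_nonneg hα hτ)
  have hdiffusion : 0 ≤ θ * τ * frobSq (σ x) :=
    mul_nonneg (mul_nonneg hθ₀ hτ) (frobSq_nonneg _)
  unfold Vtheta
  nlinarith

lemma exists_forall_le_of_quadratic_lower_bound {E : Type*} [Norm E] {f : E → ℝ} {c K : ℝ}
    (hc : 0 < c) (hf : ∀ x, c * ‖x‖ ^ 2 - K ≤ f x) (M : ℝ) :
    ∃ R : ℝ, ∀ x, R ≤ ‖x‖ → M ≤ f x := by
  have hquad : Tendsto (fun t : ℝ => c * t ^ 2 - K) atTop atTop :=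
    tendsto_atTop_add_const_right _ _ ((tendsto_pow_atTop two_ne_zero).const_mul_atTop hc)
  obtain ⟨R, hR⟩ := tendsto_atTop_atTop.1 hquad M
  exact ⟨R, fun x hx => (hR _ hx).trans (hf x)⟩

theorem Vtheta_coercive_general {d m : ℕ}
    (b : EuclideanSpace ℝ (Fin d) → EuclideanSpace ℝ (Fin d))
    (σ : EuclideanSpace ℝ (Fin d) → Matrix (Fin d) (Fin m) ℝ)
    (L₂ L₃ : ℝ) (hL₃ : 0 < L₃)
    (hA2 : ∀ x : EuclideanSpace ℝ (Fin d),
      2 * ⟪b x, x⟫ + frobSq (σ x) ≤ L₂ - L₃ * ‖x‖ ^ 2)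
    (θ lam τ : ℝ) (hθ : θ ∈ Set.Ioc (1/2 : ℝ) 1) (hlam : lam ∈ Set.Ioc (0 : ℝ) (2 * θ - 1))
    (hτ : τ ∈ Set.Ioo (0 : ℝ) 1) :
    (∀ x : EuclideanSpace ℝ (Fin d),
        Vtheta b σ θ lam τ x ≥
          (1 + (1 - θ + lam) * L₃ * τ) * ‖x‖ ^ 2 - L₂ * (1 - θ + lam) * τ) ∧
      (∀ M : ℝ, ∃ R : ℝ, ∀ x : EuclideanSpace ℝ (Fin d),
        R ≤ ‖x‖ → M ≤ Vtheta b σ θ lam τ x) := by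
  have hα : 0 < 1 - θ + lam := by linarith [hθ.2, hlam.1]
  have hbound : ∀ x, (1 + (1 - θ + lam) * L₃ * τ) * ‖x‖ ^ 2 - L₂ * (1 - θ + lam) * τ ≤
      Vtheta b σ θ lam τ x := fun x =>
    Vtheta_ge_of_coercivity (hA2 x) (by linarith [hθ.1]) hα.le hτ.1.le
  have hlead : 0 < 1 + (1 - θ + lam) * L₃ * τ := by
    have := mul_pos (mul_pos hα hL₃) hτ.1
    linarith
  exact ⟨hbound, exists_forall_le_of_quadratic_lower_bound hlead hbound⟩

/-- coercivity lower bound for the Lyapunov function `V_θ`; in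
particular `V_θ(x) → ∞` as `|x| → ∞`. -/
theorem Vtheta_coercive {d m : ℕ}
    (b : EuclideanSpace ℝ (Fin d) → EuclideanSpace ℝ (Fin d))
    (σ : EuclideanSpace ℝ (Fin d) → Matrix (Fin d) (Fin m) ℝ)
    (L₂ L₃ : ℝ) (hL₂ : 0 < L₂) (hL₃ : 0 < L₃)
    (hA2 : ∀ x : EuclideanSpace ℝ (Fin d),
      2 * ⟪b x, x⟫ + frobSq (σ x) ≤ L₂ - L₃ * ‖x‖ ^ 2)
    (θ lam τ : ℝ) (hθ : θ ∈ Set.Ioc (1/2 : ℝ) 1) (hlam : lam ∈ Set.Ioc (0 : ℝ) (2 * θ - 1))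
    (hτ : τ ∈ Set.Ioo (0 : ℝ) 1) :
    (∀ x : EuclideanSpace ℝ (Fin d),
        Vtheta b σ θ lam τ x ≥
          (1 + (1 - θ + lam) * L₃ * τ) * ‖x‖ ^ 2 - L₂ * (1 - θ + lam) * τ) ∧
      (∀ M : ℝ, ∃ R : ℝ, ∀ x : EuclideanSpace ℝ (Fin d),
        R ≤ ‖x‖ → M ≤ Vtheta b σ θ lam τ x) :=
  Vtheta_coercive_general b σ L₂ L₃ hL₃ hA2 θ lam τ hθ hlam hτ
end

section
/- Let E be a finite-dimensional real inner product space and let f : E → E be continuous and uniformly monotone: there is c > 0 such that ⟨f(x) − f(y), x − y⟩ ≥ c‖x − y‖² for all x, y ∈ E. Then: (i) ‖f(x) − f(y)‖ ≥ c‖x − y‖ for all x, y; (ii) f is a bijection of E; (iii) for every x ∈ E and r > 0, the open ball B(f(x), cr) is contained in the image f(B(x, r)); hence f maps open sets to open sets. -/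
open MeasureTheory Filter
local notation "⟪" x ", " y "⟫" => @inner ℝ _ _ x y

section Aux

variable {E : Type*} [NormedAddCommGroup E] [InnerProductSpace ℝ E] [FiniteDimensional ℝ E]

/-- A uniformly monotone map expands distances. -/
theorem aux_expand (g : E → E) (c : ℝ) (hc : 0 < c)
    (hmono : ∀ x y : E, ⟪g x - g y, x - y⟫ ≥ c * ‖x - y‖ ^ 2) (x y : E) :
    c * ‖x - y‖ ≤ ‖g x - g y‖ := by
  rcases eq_or_ne x y with rfl | hne
  · simp
  · have h1 := hmono x y
    have h2 : ⟪g x - g y, x - y⟫ ≤ ‖g x - g y‖ * ‖x - y‖ := real_inner_le_norm _ _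
    have h3 : 0 < ‖x - y‖ := by
      rw [norm_pos_iff, sub_ne_zero]; exact hne
    nlinarith

set_option maxHeartbeats 1600000 in
/-- Surjectivity of a uniformly monotone map which is Lipschitz on balls. -/
theorem aux_surj_of_lip (g : E → E) (c : ℝ) (hc : 0 < c)
    (hlip : ∀ R : ℝ, ∃ M : ℝ, 0 < M ∧ c ≤ M ∧ ∀ u ∈ Metric.closedBall (0 : E) R,
      ∀ v ∈ Metric.closedBall (0 : E) R, ‖g u - g v‖ ≤ M * ‖u - v‖)
    (hmono : ∀ x y : E, ⟪g x - g y, x - y⟫ ≥ c * ‖x - y‖ ^ 2) :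
    ∀ y : E, ∃ x : E, g x = y := by
  intro y
  set N : ℝ := ‖g 0 - y‖ with hN
  have hN0 : 0 ≤ N := norm_nonneg _
  set R : ℝ := 2 * N / c + 1 with hRdef
  have hR0 : 0 < R := by positivity
  obtain ⟨M, hM0, hcM, hlipM⟩ := hlip R
  have hM2 : (0:ℝ) < M ^ 2 := by positivity
  set τ : ℝ := c / M ^ 2 with hτdef
  have hτ0 : 0 < τ := by positivity
  have hτM : τ * M ^ 2 = c := div_mul_cancel₀ c (ne_of_gt hM2)
  have hcM2 : c ^ 2 / M ^ 2 ≤ 1 := by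
    rw [div_le_one hM2]; nlinarith
  have hcM2pos : 0 < c ^ 2 / M ^ 2 := by positivity
  set k : ℝ := Real.sqrt (1 - c ^ 2 / M ^ 2) with hkdef
  have hk0 : 0 ≤ k := Real.sqrt_nonneg _
  have hk2 : k ^ 2 = 1 - c ^ 2 / M ^ 2 := Real.sq_sqrt (by linarith)
  have hk1 : k < 1 := by nlinarith
  have hk2M : k ^ 2 * M ^ 2 = M ^ 2 - c ^ 2 := by
    rw [hk2]; field_simp
  set T : E → E := fun z => z - τ • (g z - y) with hTdef
  have hTsub : ∀ u v : E, T u - T v = (u - v) - τ • (g u - g v) := by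
    intro u v
    simp only [hTdef, smul_sub]
    abel
  have hcontr : ∀ u ∈ Metric.closedBall (0 : E) R, ∀ v ∈ Metric.closedBall (0 : E) R,
      ‖T u - T v‖ ≤ k * ‖u - v‖ := by
    intro u hu v hv
    have hB : ‖g u - g v‖ ≤ M * ‖u - v‖ := hlipM u hu v hv
    have hB0 : 0 ≤ ‖g u - g v‖ := norm_nonneg _
    have hA0 : 0 ≤ ‖u - v‖ := norm_nonneg _
    have hI : ⟪g u - g v, u - v⟫ ≥ c * ‖u - v‖ ^ 2 := hmono u v
    have hsq : ‖T u - T v‖ ^ 2 ≤ (k * ‖u - v‖) ^ 2 := by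
      rw [hTsub, @norm_sub_sq_real]
      rw [real_inner_smul_right, norm_smul, Real.norm_eq_abs, abs_of_pos hτ0]
      have hIc : ⟪u - v, g u - g v⟫ = ⟪g u - g v, u - v⟫ := real_inner_comm _ _
      rw [hIc]
      have hBsq : ‖g u - g v‖ ^ 2 ≤ M ^ 2 * ‖u - v‖ ^ 2 := by nlinarith
      have hstep1 : (τ * ‖g u - g v‖) ^ 2 ≤ τ * c * ‖u - v‖ ^ 2 := by
        have h5 : τ ^ 2 * ‖g u - g v‖ ^ 2 ≤ τ ^ 2 * (M ^ 2 * ‖u - v‖ ^ 2) :=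
          mul_le_mul_of_nonneg_left hBsq (by positivity)
        calc (τ * ‖g u - g v‖) ^ 2 = τ ^ 2 * ‖g u - g v‖ ^ 2 := by ring
          _ ≤ τ ^ 2 * (M ^ 2 * ‖u - v‖ ^ 2) := h5
          _ = (τ * M ^ 2) * (τ * ‖u - v‖ ^ 2) := by ring
          _ = τ * c * ‖u - v‖ ^ 2 := by rw [hτM]; ring
      have hstep2 : τ * c * ‖u - v‖ ^ 2 ≤ τ * ⟪g u - g v, u - v⟫ := by
        have h6 := mul_le_mul_of_nonneg_left hI (le_of_lt hτ0)
        linarith [h6]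
      have hτc : τ * c = c ^ 2 / M ^ 2 := by
        rw [hτdef]; ring
      have hgoal : (k * ‖u - v‖) ^ 2 = (1 - c ^ 2 / M ^ 2) * ‖u - v‖ ^ 2 := by
        rw [mul_pow, hk2]
      rw [hgoal]
      nlinarith [hstep1, hstep2, hτc, sq_nonneg ‖u - v‖]
    have h1 := Real.sqrt_le_sqrt hsq
    rw [Real.sqrt_sq (norm_nonneg _), Real.sqrt_sq (by positivity)] at h1
    exact h1
  have hT0 : ‖T 0‖ = τ * N := by
    simp only [hTdef, zero_sub, norm_neg, norm_smul, Real.norm_eq_abs, abs_of_pos hτ0, hN]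
  have h1k : c ^ 2 / (2 * M ^ 2) ≤ 1 - k := by
    have h2 : (1 - k) * (1 + k) = c ^ 2 / M ^ 2 := by nlinarith [hk2]
    have e : c ^ 2 / M ^ 2 = 2 * (c ^ 2 / (2 * M ^ 2)) := by ring
    nlinarith [h2, e, sq_nonneg (1 - k)]
  have hmaps : Set.MapsTo T (Metric.closedBall (0 : E) R) (Metric.closedBall (0 : E) R) := by
    intro u hu
    rw [Metric.mem_closedBall, dist_zero_right] at hu ⊢
    have h0R : (0 : E) ∈ Metric.closedBall (0 : E) R := Metric.mem_closedBall_self hR0.le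
    have huR : u ∈ Metric.closedBall (0 : E) R := by
      rwa [Metric.mem_closedBall, dist_zero_right]
    have h1 : ‖T u‖ ≤ ‖T u - T 0‖ + ‖T 0‖ := by
      have e : T u - T 0 + T 0 = T u := by abel
      calc ‖T u‖ = ‖T u - T 0 + T 0‖ := by rw [e]
        _ ≤ ‖T u - T 0‖ + ‖T 0‖ := norm_add_le _ _
    have h2 : ‖T u - T 0‖ ≤ k * ‖u - 0‖ := hcontr u huR 0 h0R
    rw [sub_zero] at h2
    have h3 : k * ‖u‖ ≤ k * R := mul_le_mul_of_nonneg_left hu hk0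
    -- need k * R + τ * N ≤ R, i.e. τ * N ≤ (1 - k) * R
    have key : τ * N ≤ (1 - k) * R := by
      have e1 : c ^ 2 / (2 * M ^ 2) * R = c * N / M ^ 2 + c ^ 2 / (2 * M ^ 2) := by
        rw [hRdef]; field_simp
      have e2 : τ * N = c * N / M ^ 2 := by rw [hτdef]; ring
      have e3 : c ^ 2 / (2 * M ^ 2) * R ≤ (1 - k) * R :=
        mul_le_mul_of_nonneg_right h1k hR0.le
      have e4 : 0 < c ^ 2 / (2 * M ^ 2) := by positivity
      calc τ * N = c * N / M ^ 2 := e2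
        _ ≤ c * N / M ^ 2 + c ^ 2 / (2 * M ^ 2) := le_add_of_nonneg_right e4.le
        _ = c ^ 2 / (2 * M ^ 2) * R := e1.symm
        _ ≤ (1 - k) * R := e3
    linarith [h1, h2, h3, key, hT0]
  -- Banach fixed point on the closed ball
  have hsc : IsComplete (Metric.closedBall (0 : E) R) :=
    Metric.isClosed_closedBall.isComplete
  set kN : NNReal := ⟨k, hk0⟩ with hkN
  have hlipT : LipschitzOnWith kN T (Metric.closedBall (0 : E) R) := by
    rw [lipschitzOnWith_iff_dist_le_mul]
    intro a ha b hb
    rw [dist_eq_norm, dist_eq_norm]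
    exact hcontr a ha b hb
  have hcontracting : ContractingWith kN (hmaps.restrict T _ _) := by
    constructor
    · exact_mod_cast hk1
    · exact hlipT.mapsToRestrict hmaps
  obtain ⟨x, hxs, hfix, -, -⟩ := hcontracting.exists_fixedPoint' hsc hmaps
    (Metric.mem_closedBall_self hR0.le) (edist_ne_top _ _)
  refine ⟨x, ?_⟩
  have : x - τ • (g x - y) = x := hfix
  have h5 : τ • (g x - y) = 0 := by
    have := sub_eq_self.mp this
    exact this
  rcases smul_eq_zero.mp h5 with h | h
  · exact absurd h (ne_of_gt hτ0)
  · exact sub_eq_zero.mp h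

end Aux

set_option maxHeartbeats 2000000 in
/-- a continuous uniformly monotone map on a finite-dimensional real
inner product space expands distances by the monotonicity constant, is a bijection,
contains `B(f(x), cr)` in `f(B(x,r))`, and is an open map. -/
theorem uniformly_monotone_open_bijection {E : Type*}
    [NormedAddCommGroup E] [InnerProductSpace ℝ E] [FiniteDimensional ℝ E]
    (f : E → E) (c : ℝ) (hc : 0 < c) (hf : Continuous f)
    (hmono : ∀ x y : E, ⟪f x - f y, x - y⟫ ≥ c * ‖x - y‖ ^ 2) :
    (∀ x y : E, ‖f x - f y‖ ≥ c * ‖x - y‖) ∧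
      Function.Bijective f ∧
      (∀ (x : E) (r : ℝ), 0 < r → Metric.ball (f x) (c * r) ⊆ f '' Metric.ball x r) ∧
      IsOpenMap f := by
  have hexp : ∀ x y : E, c * ‖x - y‖ ≤ ‖f x - f y‖ := aux_expand f c hc hmono
  have hinj : Function.Injective f := by
    intro a b hab
    have h1 := hexp a b
    rw [hab, sub_self, norm_zero] at h1
    have h2 : ‖a - b‖ ≤ 0 := by
      by_contra h
      push_neg at h
      nlinarith
    have : a - b = 0 := by
      rw [← norm_le_zero_iff]
      exact h2
    exact sub_eq_zero.mp this
  have hsurj : Function.Surjective f := by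
    borelize E
    set μ : Measure E := (stdOrthonormalBasis ℝ E).toBasis.addHaar with hμ
    set φ : ℕ → ContDiffBump (0 : E) := fun n =>
      ⟨1 / (n + 1) / 2, 1 / (n + 1), by positivity, by
        have : (0:ℝ) < 1 / (n + 1) := by positivity
        linarith⟩ with hφ
    set F : ℕ → E → E := fun n =>
      MeasureTheory.convolution ((φ n).normed μ) f (ContinuousLinearMap.lsmul ℝ ℝ) μ with hF
    have hFdef : ∀ n x, F n x = ∫ t, (φ n).normed μ t • f (x - t) ∂μ := by
      intro n x
      show MeasureTheory.convolution ((φ n).normed μ) f (ContinuousLinearMap.lsmul ℝ ℝ) μ x = _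
      rw [MeasureTheory.convolution_def]
      simp only [ContinuousLinearMap.lsmul_apply]
    have hInt : ∀ (n : ℕ) (x : E), Integrable (fun t => (φ n).normed μ t • f (x - t)) μ := by
      intro n x
      apply Continuous.integrable_of_hasCompactSupport
      · exact ((φ n).continuous_normed).smul (hf.comp (continuous_const.sub continuous_id))
      · exact ((φ n).hasCompactSupport_normed).smul_right
    have hmonoF : ∀ (n : ℕ) (x y : E), ⟪F n x - F n y, x - y⟫ ≥ c * ‖x - y‖ ^ 2 := by
      intro n x y
      have hIntSub : Integrable
          (fun t => (φ n).normed μ t • f (x - t) - (φ n).normed μ t • f (y - t)) μ :=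
        (hInt n x).sub (hInt n y)
      have hsub : F n x - F n y
          = ∫ t, ((φ n).normed μ t • f (x - t) - (φ n).normed μ t • f (y - t)) ∂μ := by
        rw [hFdef, hFdef, ← integral_sub (hInt n x) (hInt n y)]
      rw [hsub, real_inner_comm, ← integral_inner hIntSub (x - y)]
      have hrhs : c * ‖x - y‖ ^ 2 = ∫ t, (φ n).normed μ t * (c * ‖x - y‖ ^ 2) ∂μ := by
        rw [integral_mul_const, (φ n).integral_normed, one_mul]
      rw [ge_iff_le, hrhs]
      apply integral_mono
      · exact ((φ n).integrable_normed).mul_const _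
      · exact ((hInt n x).sub (hInt n y)).const_inner (x - y)
      · intro t
        have h1 : (φ n).normed μ t • f (x - t) - (φ n).normed μ t • f (y - t)
            = (φ n).normed μ t • (f (x - t) - f (y - t)) := by rw [smul_sub]
        simp only [h1, real_inner_smul_right]
        rw [real_inner_comm]
        have h2 := hmono (x - t) (y - t)
        have h3 : x - t - (y - t) = x - y := by abel
        rw [h3] at h2
        exact mul_le_mul_of_nonneg_left h2 ((φ n).nonneg_normed t)
    have hlipF : ∀ n : ℕ, ∀ R : ℝ, ∃ M : ℝ, 0 < M ∧ c ≤ M ∧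
        ∀ u ∈ Metric.closedBall (0 : E) R, ∀ v ∈ Metric.closedBall (0 : E) R,
          ‖F n u - F n v‖ ≤ M * ‖u - v‖ := by
      intro n R
      have hcd : ContDiff ℝ 1 (F n) := by
        rw [hF]
        exact HasCompactSupport.contDiff_convolution_left _
          ((φ n).hasCompactSupport_normed) ((φ n).contDiff_normed) (hf.locallyIntegrable)
      obtain ⟨C, hC⟩ := (isCompact_closedBall (0 : E) R).exists_bound_of_continuousOn
        ((hcd.continuous_fderiv one_ne_zero).continuousOn)
      set M : ℝ := max C c with hM
      refine ⟨M, lt_of_lt_of_le hc (le_max_right _ _), le_max_right _ _, ?_⟩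
      have hM0 : 0 ≤ M := le_trans hc.le (le_max_right _ _)
      have hlipOn : LipschitzOnWith M.toNNReal (F n) (Metric.closedBall (0 : E) R) := by
        apply Convex.lipschitzOnWith_of_nnnorm_fderiv_le
          (fun x _ => (hcd.differentiable one_ne_zero) x)
        · intro x hx
          have := hC x hx
          rw [← NNReal.coe_le_coe, coe_nnnorm, Real.coe_toNNReal _ hM0]
          exact le_trans this (le_max_left _ _)
        · exact convex_closedBall _ _
      intro u hu v hv
      have := lipschitzOnWith_iff_dist_le_mul.mp hlipOn u hu v hv
      rw [dist_eq_norm, dist_eq_norm, Real.coe_toNNReal _ hM0] at this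
      exact this
    intro y
    have hxs : ∀ n : ℕ, ∃ x : E, F n x = y := fun n =>
      aux_surj_of_lip (F n) c hc (hlipF n) (hmonoF n) y
    choose xs hxsy using hxs
    -- boundedness of the solutions
    have hrOut : Filter.Tendsto (fun n : ℕ => (φ n).rOut) Filter.atTop (nhds 0) := by
      have : (fun n : ℕ => (φ n).rOut) = fun n : ℕ => 1 / ((n : ℝ) + 1) := rfl
      rw [this]
      exact tendsto_one_div_add_atTop_nhds_zero_nat
    have hF0 : Filter.Tendsto (fun n => F n 0) Filter.atTop (nhds (f 0)) := by
      rw [hF]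
      exact ContDiffBump.convolution_tendsto_right_of_continuous hrOut hf 0
    have hnormlim : Filter.Tendsto (fun n => ‖y - F n 0‖) Filter.atTop (nhds ‖y - f 0‖) :=
      (tendsto_const_nhds.sub hF0).norm
    obtain ⟨B, hB⟩ := hnormlim.bddAbove_range
    have hbound : ∀ n : ℕ, ‖xs n‖ ≤ B / c := by
      intro n
      have h1 : c * ‖xs n - 0‖ ≤ ‖F n (xs n) - F n 0‖ :=
        aux_expand (F n) c hc (hmonoF n) (xs n) 0
      rw [sub_zero, hxsy n] at h1
      have h2 : ‖y - F n 0‖ ≤ B := hB ⟨n, rfl⟩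
      rw [le_div_iff₀ hc]
      nlinarith [h1, h2]
    have hmem : ∀ n : ℕ, xs n ∈ Metric.closedBall (0 : E) (B / c) := by
      intro n
      rw [Metric.mem_closedBall, dist_zero_right]
      exact hbound n
    obtain ⟨a, -, ψ, hψ, hlim⟩ := (isCompact_closedBall (0 : E) (B / c)).tendsto_subseq hmem
    refine ⟨a, ?_⟩
    have h1 : Filter.Tendsto (fun k : ℕ => (φ (ψ k)).rOut) Filter.atTop (nhds 0) :=
      hrOut.comp hψ.tendsto_atTop
    have hconv : Filter.Tendsto
        (fun k : ℕ => MeasureTheory.convolution ((φ (ψ k)).normed μ) f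
        (ContinuousLinearMap.lsmul ℝ ℝ) μ (xs (ψ k))) Filter.atTop (nhds (f a)) := by
      apply ContDiffBump.convolution_tendsto_right h1
        (Filter.Eventually.of_forall fun _ => hf.aestronglyMeasurable)
      · exact (hf.tendsto a).comp tendsto_snd
      · exact hlim
    have hconst : (fun k : ℕ => MeasureTheory.convolution ((φ (ψ k)).normed μ) f
        (ContinuousLinearMap.lsmul ℝ ℝ) μ (xs (ψ k))) = fun _ => y := by
      funext k
      exact hxsy (ψ k)
    rw [hconst] at hconv
    exact (tendsto_nhds_unique tendsto_const_nhds hconv).symm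
  have hball : ∀ (x : E) (r : ℝ), 0 < r →
      Metric.ball (f x) (c * r) ⊆ f '' Metric.ball x r := by
    intro x r hr y hy
    obtain ⟨z, rfl⟩ := hsurj y
    rw [Metric.mem_ball, dist_eq_norm] at hy
    have h1 : c * ‖z - x‖ ≤ ‖f z - f x‖ := hexp z x
    refine ⟨z, ?_, rfl⟩
    rw [Metric.mem_ball, dist_eq_norm]
    nlinarith
  refine ⟨fun x y => hexp x y, ⟨hinj, hsurj⟩, hball, ?_⟩
  intro U hU
  rw [Metric.isOpen_iff]
  rintro _ ⟨x, hxU, rfl⟩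
  obtain ⟨r, hr, hrU⟩ := Metric.isOpen_iff.mp hU x hxU
  exact ⟨c * r, by positivity, (hball x r hr).trans (Set.image_mono hrU)⟩
end

section
/- Let V be a finite-dimensional real inner product space, let A : V → V be a linear map with ⟨Ax, x⟩ ≥ λ₁‖x‖² for all x ∈ V for some λ₁ > 0, and let F : V → V be continuous and one-sided Lipschitz: ⟨x − y, F(x) − F(y)⟩ ≤ K₁‖x − y‖² for all x, y ∈ V. Let τ > 0 satisfy (K₁ − λ₁)τ < 1 and define F̂(x) := x + τAx − τF(x). Then: (i) ‖F̂(x) − F̂(y)‖ ≥ (1 − K₁τ + λ₁τ)‖x − y‖ for all x, y; (ii) F̂ is a bijection of V; (iii) F̂ is an open map (it maps open sets to open sets). -/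
open MeasureTheory Filter
local notation "⟪" x ", " y "⟫" => @inner ℝ _ _ x y

set_option linter.unusedSectionVars false
set_option linter.unusedVariables false
set_option maxHeartbeats 1000000
open Metric Set Function Topology ContinuousLinearMap
open scoped Convolution

section DIEGAux

variable {W : Type*} [NormedAddCommGroup W] [InnerProductSpace ℝ W] [FiniteDimensional ℝ W]

lemma expand_of_mono {G : W → W} {c : ℝ} (hc : 0 < c)
    (hm : ∀ x y, c * ‖x - y‖ ^ 2 ≤ ⟪G x - G y, x - y⟫) (x y : W) :
    c * ‖x - y‖ ≤ ‖G x - G y‖ := by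
  rcases eq_or_ne x y with rfl | hxy
  · simp
  · have h1 : ⟪G x - G y, x - y⟫ ≤ ‖G x - G y‖ * ‖x - y‖ := real_inner_le_norm _ _
    have h2 := hm x y
    have hn : 0 < ‖x - y‖ := by
      simpa [sub_eq_zero] using hxy
    nlinarith [hn]

lemma injective_of_mono {G : W → W} {c : ℝ} (hc : 0 < c)
    (hm : ∀ x y, c * ‖x - y‖ ^ 2 ≤ ⟪G x - G y, x - y⟫) : Function.Injective G := by
  intro x y h
  have := expand_of_mono hc hm x y
  rw [h, sub_self, norm_zero] at this
  have : ‖x - y‖ ≤ 0 := by nlinarith [norm_nonneg (x - y)]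
  have : x - y = 0 := by simpa [norm_le_zero_iff] using this
  exact sub_eq_zero.mp this

lemma isClosed_range_of_mono {G : W → W} {c : ℝ} (hc : 0 < c) (hG : Continuous G)
    (hm : ∀ x y, c * ‖x - y‖ ^ 2 ≤ ⟪G x - G y, x - y⟫) : IsClosed (Set.range G) := by
  apply IsSeqClosed.isClosed
  intro u y hu huy
  choose x hx using hu
  have hcs : CauchySeq u := huy.cauchySeq
  have hcx : CauchySeq x := by
    rw [Metric.cauchySeq_iff] at hcs ⊢
    intro ε hε
    obtain ⟨N, hN⟩ := hcs (c * ε) (by positivity)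
    refine ⟨N, fun m hm' n hn => ?_⟩
    have h1 := expand_of_mono hc hm (x m) (x n)
    rw [hx m, hx n] at h1
    have h2 := hN m hm' n hn
    rw [dist_eq_norm] at h2 ⊢
    nlinarith
  obtain ⟨a, ha⟩ := cauchySeq_tendsto_of_complete hcx
  refine ⟨a, tendsto_nhds_unique ?_ huy⟩
  have h := (hG.tendsto a).comp ha
  have : (fun n => G (x n)) = u := funext hx
  rw [← this]; exact h
lemma fderiv_coercive_of_mono {G : W → W} {c : ℝ} {G' : W →L[ℝ] W} {x : W}
    (hd : HasFDerivAt G G' x)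
    (hm : ∀ x y, c * ‖x - y‖ ^ 2 ≤ ⟪G x - G y, x - y⟫) (u : W) :
    c * ‖u‖ ^ 2 ≤ ⟪G' u, u⟫ := by
  have hd' : HasFDerivAt G G' (x + (0:ℝ) • u) := by simpa using hd
  have h1 : HasDerivAt (fun t : ℝ => x + t • u) u 0 := by
    simpa using ((hasDerivAt_id (0:ℝ)).smul_const u).const_add x
  have hline : HasDerivAt (fun t : ℝ => G (x + t • u)) (G' u) 0 :=
    hd'.comp_hasDerivAt 0 h1
  have key : ∀ t : ℝ, 0 < t → c * ‖u‖ ^ 2 ≤ ⟪t⁻¹ • (G (x + t • u) - G x), u⟫ := by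
    intro t ht
    have h := hm (x + t • u) x
    have hsub : (x + t • u) - x = t • u := by abel
    rw [hsub] at h
    have heq : ⟪t⁻¹ • (G (x + t • u) - G x), u⟫
        = t⁻¹ * t⁻¹ * ⟪G (x + t • u) - G x, t • u⟫ := by
      rw [real_inner_smul_left, real_inner_smul_right]
      field_simp
    rw [heq]
    have hn : ‖t • u‖ ^ 2 = t ^ 2 * ‖u‖ ^ 2 := by
      rw [norm_smul]; simp [abs_of_pos ht]; ring
    rw [hn] at h
    have ht2 : 0 < t ^ 2 := by positivity
    calc c * ‖u‖ ^ 2 = t⁻¹ * t⁻¹ * (c * (t ^ 2 * ‖u‖ ^ 2)) := by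
          field_simp
      _ ≤ t⁻¹ * t⁻¹ * ⟪G (x + t • u) - G x, t • u⟫ := by
          apply mul_le_mul_of_nonneg_left _ (by positivity)
          nlinarith
  have hslope : Tendsto (fun t : ℝ => t⁻¹ • (G (x + t • u) - G x)) (𝓝[≠] (0:ℝ))
      (𝓝 (G' u)) := by
    have := hasDerivAt_iff_tendsto_slope.mp hline
    have he : slope (fun t : ℝ => G (x + t • u)) 0 = fun t : ℝ => t⁻¹ • (G (x + t • u) - G x) := by
      funext t
      rw [slope_def_module]
      simp
    rwa [he] at this
  have hlim : Tendsto (fun t : ℝ => ⟪t⁻¹ • (G (x + t • u) - G x), u⟫)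
      (𝓝[>] (0:ℝ)) (𝓝 ⟪G' u, u⟫) := by
    have h2 := hslope.mono_left (nhdsWithin_mono _ (fun t ht => ne_of_gt ht :
      Ioi (0:ℝ) ⊆ {t | t ≠ 0}))
    exact ((continuous_inner.comp (Continuous.prodMk continuous_id
      (continuous_const : Continuous fun _ : W => u))).tendsto _).comp h2
  refine ge_of_tendsto hlim ?_
  filter_upwards [self_mem_nhdsWithin] with t ht using key t ht
lemma surjective_of_contDiff_mono {G : W → W} {c : ℝ} (hc : 0 < c)
    (hG : ContDiff ℝ (⊤ : ℕ∞) G)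
    (hm : ∀ x y, c * ‖x - y‖ ^ 2 ≤ ⟪G x - G y, x - y⟫) : Function.Surjective G := by
  -- each derivative is a linear equivalence
  have hdiff : ∀ x : W, HasStrictFDerivAt G (fderiv ℝ G x) x := fun x =>
    (hG.contDiffAt).hasStrictFDerivAt (by norm_num)
  have hinv : ∀ x : W, Function.Bijective (fderiv ℝ G x) := by
    intro x
    have hcoer := fderiv_coercive_of_mono (hdiff x).hasFDerivAt hm
    have hinj : Function.Injective (fderiv ℝ G x) := by
      intro u v huv
      have h0 : (fderiv ℝ G x) (u - v) = 0 := by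
        rw [map_sub, huv, sub_self]
      have := hcoer (u - v)
      rw [h0] at this
      simp only [inner_zero_left] at this
      have : ‖u - v‖ ^ 2 ≤ 0 := by nlinarith
      have : u - v = 0 := by
        have hn := sq_nonneg ‖u - v‖
        have : ‖u - v‖ ^ 2 = 0 := le_antisymm this hn
        simpa [pow_eq_zero_iff] using this
      exact sub_eq_zero.mp this
    exact ⟨hinj, (LinearMap.injective_iff_surjective
      (f := (fderiv ℝ G x).toLinearMap)).mp hinj⟩
  set e : W → W ≃L[ℝ] W := fun x =>
    LinearEquiv.toContinuousLinearEquiv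
      (LinearEquiv.ofBijective (fderiv ℝ G x).toLinearMap (hinv x))
  have hstrict : ∀ x : W, HasStrictFDerivAt G ((e x : W →L[ℝ] W)) x := by
    intro x
    have : (e x : W →L[ℝ] W) = fderiv ℝ G x := by
      ext u
      rfl
    rw [this]
    exact hdiff x
  have hopen : IsOpenMap G := isOpenMap_of_hasStrictFDerivAt_equiv hstrict
  have hro : IsOpen (Set.range G) := by
    have := hopen univ isOpen_univ
    simpa [Set.image_univ] using this
  have hclopen : IsClopen (Set.range G) :=
    ⟨isClosed_range_of_mono hc hG.continuous hm, hro⟩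
  intro b
  have : Set.range G = Set.univ := hclopen.eq_univ ⟨G 0, Set.mem_range_self 0⟩
  exact (Set.eq_univ_iff_forall.mp this b)

end DIEGAux

section Euclid
variable {n : ℕ}
local notation "E" => EuclideanSpace ℝ (Fin n)

/-- monotonicity is preserved by mollification -/
lemma mollified_mono (φ : ContDiffBump (0 : E)) {G : E → E} {c : ℝ}
    (hG : Continuous G) (hm : ∀ x y, c * ‖x - y‖ ^ 2 ≤ ⟪G x - G y, x - y⟫) (x y : E) :
    c * ‖x - y‖ ^ 2 ≤ ⟪(φ.normed volume ⋆[lsmul ℝ ℝ, volume] G) x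
      - (φ.normed volume ⋆[lsmul ℝ ℝ, volume] G) y, x - y⟫ := by
  have hce : ConvolutionExists (φ.normed volume) G (lsmul ℝ ℝ) volume :=
    HasCompactSupport.convolutionExists_left _ φ.hasCompactSupport_normed
      φ.continuous_normed (hG.locallyIntegrable)
  have hx := hce x
  have hy := hce y
  have hxy : Integrable (fun t : E => φ.normed volume t • (G (x - t) - G (y - t))) volume := by
    have := hx.integrable.sub hy.integrable
    simpa [smul_sub, Pi.sub_def] using this
  -- hx : Integrable fun t => lsmul ℝ ℝ (φ.normed volume t) (G (x - t))
  have hsub : (φ.normed volume ⋆[lsmul ℝ ℝ, volume] G) x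
      - (φ.normed volume ⋆[lsmul ℝ ℝ, volume] G) y
      = ∫ t, φ.normed volume t • (G (x - t) - G (y - t)) := by
    rw [MeasureTheory.convolution_def, MeasureTheory.convolution_def,
      ← MeasureTheory.integral_sub hx.integrable hy.integrable]
    simp [smul_sub]
  rw [hsub]
  have hinner : ⟪∫ t, φ.normed volume t • (G (x - t) - G (y - t)), x - y⟫
      = ∫ t, φ.normed volume t * ⟪G (x - t) - G (y - t), x - y⟫ := by
    rw [real_inner_comm, ← integral_inner hxy (x - y)]
    congr 1
    funext t
    rw [real_inner_smul_right, real_inner_comm]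
  rw [hinner]
  have hnneg := φ.nonneg_normed (μ := (volume : MeasureTheory.Measure E))
  have hint1 : Integrable (fun t : E => φ.normed volume t * ⟪G (x - t) - G (y - t), x - y⟫)
      volume := by
    have : (fun t : E => φ.normed volume t * ⟪G (x - t) - G (y - t), x - y⟫)
        = fun t : E => ⟪φ.normed volume t • (G (x - t) - G (y - t)), x - y⟫ := by
      funext t; rw [real_inner_smul_left]
    rw [this]
    exact hxy.inner_const (x - y)
  have hint2 : Integrable (fun t : E => φ.normed volume t * (c * ‖x - y‖ ^ 2)) volume :=
    φ.integrable_normed.mul_const _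
  have hpt : ∀ t : E, φ.normed volume t * (c * ‖x - y‖ ^ 2)
      ≤ φ.normed volume t * ⟪G (x - t) - G (y - t), x - y⟫ := by
    intro t
    apply mul_le_mul_of_nonneg_left _ (hnneg t)
    have := hm (x - t) (y - t)
    simpa [sub_sub_sub_cancel_right] using this
  have hmono := MeasureTheory.integral_mono hint2 hint1 hpt
  have hconst : (∫ t : E, φ.normed volume t * (c * ‖x - y‖ ^ 2)) = c * ‖x - y‖ ^ 2 := by
    rw [MeasureTheory.integral_mul_const, φ.integral_normed, one_mul]
  linarith [hmono, hconst.symm.le, hconst.le]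
end Euclid

section Euclid2
variable {n : ℕ}
local notation "E" => EuclideanSpace ℝ (Fin n)

lemma surjective_of_continuous_mono_euclid {G : E → E} {c : ℝ} (hc : 0 < c)
    (hG : Continuous G) (hm : ∀ x y, c * ‖x - y‖ ^ 2 ≤ ⟪G x - G y, x - y⟫) :
    Function.Surjective G := by
  intro b
  -- mollifiers
  set φ : ℕ → ContDiffBump (0 : E) := fun k =>
    ⟨((k : ℝ) + 1)⁻¹ / 2, ((k : ℝ) + 1)⁻¹, by positivity, by
      have : (0:ℝ) < ((k : ℝ) + 1)⁻¹ := by positivity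
      linarith⟩ with hφdef
  set Gk : ℕ → E → E := fun k => (φ k).normed volume ⋆[lsmul ℝ ℝ, volume] G with hGk
  have hsmooth : ∀ k, ContDiff ℝ (⊤ : ℕ∞) (Gk k) := fun k =>
    HasCompactSupport.contDiff_convolution_left (lsmul ℝ ℝ)
      (φ k).hasCompactSupport_normed (φ k).contDiff_normed hG.locallyIntegrable
  have hmonok : ∀ k, ∀ x y : E, c * ‖x - y‖ ^ 2 ≤ ⟪Gk k x - Gk k y, x - y⟫ := fun k =>
    mollified_mono (φ k) hG hm
  have hsurj : ∀ k, Function.Surjective (Gk k) := fun k =>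
    surjective_of_contDiff_mono hc (hsmooth k) (hmonok k)
  set x : ℕ → E := fun k => (hsurj k b).choose with hx
  have hxs : ∀ k, Gk k (x k) = b := fun k => (hsurj k b).choose_spec
  have hrOut : Tendsto (fun k => (φ k).rOut) atTop (𝓝 0) := by
    simp only [hφdef]
    exact tendsto_one_div_add_atTop_nhds_zero_nat.congr (by
      intro k; rw [one_div])
  -- Gk k 0 → G 0
  have h0 : Tendsto (fun k => Gk k 0) atTop (𝓝 (G 0)) :=
    ContDiffBump.convolution_tendsto_right_of_continuous hrOut hG 0
  obtain ⟨r, hr⟩ := (isBounded_range_of_tendsto _ h0).subset_closedBall 0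
  -- boundedness of x
  have hxb : ∀ k, x k ∈ closedBall (0 : E) ((‖b‖ + r) / c) := by
    intro k
    have h1 := expand_of_mono hc (hmonok k) (x k) 0
    rw [hxs k] at h1
    have h2 : ‖Gk k 0‖ ≤ r := by
      have := hr ⟨k, rfl⟩
      simpa [dist_eq_norm] using this
    have h3 : ‖b - Gk k 0‖ ≤ ‖b‖ + r := by
      calc ‖b - Gk k 0‖ ≤ ‖b‖ + ‖Gk k 0‖ := norm_sub_le _ _
        _ ≤ ‖b‖ + r := by linarith
    simp only [mem_closedBall, dist_eq_norm, sub_zero]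
    have h4 : c * ‖x k - 0‖ ≤ ‖b‖ + r := le_trans h1 h3
    rw [sub_zero] at h4
    rw [mul_comm] at h4
    exact (le_div_iff₀ hc).mpr h4
  obtain ⟨a, -, σ, hσ, ha⟩ := tendsto_subseq_of_bounded isBounded_closedBall hxb
  -- Gk (σ j) (x (σ j)) → G a
  have hconv : Tendsto (fun j => Gk (σ j) (x (σ j))) atTop (𝓝 (G a)) := by
    apply ContDiffBump.convolution_tendsto_right
      (φ := fun j => φ (σ j)) (g := fun _ => G) (k := fun j => x (σ j))
    · exact hrOut.comp hσ.tendsto_atTop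
    · exact Eventually.of_forall fun _ => hG.aestronglyMeasurable
    · exact (hG.tendsto a).comp tendsto_snd
    · exact ha
  have hb : Tendsto (fun j => Gk (σ j) (x (σ j))) atTop (𝓝 b) := by
    simp only [hxs]
    exact tendsto_const_nhds
  exact ⟨a, tendsto_nhds_unique hconv hb⟩
end Euclid2

section Transport
open Metric Set Function Topology

lemma surjective_of_continuous_mono {V : Type*}
    [NormedAddCommGroup V] [InnerProductSpace ℝ V] [FiniteDimensional ℝ V]
    {G : V → V} {c : ℝ} (hc : 0 < c) (hG : Continuous G)
    (hm : ∀ x y, c * ‖x - y‖ ^ 2 ≤ ⟪G x - G y, x - y⟫) : Function.Surjective G := by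
  set e := (stdOrthonormalBasis ℝ V).repr with he
  set G' : EuclideanSpace ℝ (Fin (Module.finrank ℝ V)) →
      EuclideanSpace ℝ (Fin (Module.finrank ℝ V)) := fun u => e (G (e.symm u)) with hG'
  have hG'c : Continuous G' :=
    e.continuous.comp (hG.comp e.symm.continuous)
  have hG'm : ∀ u v, c * ‖u - v‖ ^ 2 ≤ ⟪G' u - G' v, u - v⟫ := by
    intro u v
    have h1 : u - v = e (e.symm u - e.symm v) := by
      rw [map_sub]; simp
    have h2 : G' u - G' v = e (G (e.symm u) - G (e.symm v)) := by
      rw [map_sub]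
    rw [h1, h2, e.inner_map_map, e.norm_map]
    exact hm _ _
  have hs := surjective_of_continuous_mono_euclid hc hG'c hG'm
  intro b
  obtain ⟨u, hu⟩ := hs (e b)
  refine ⟨e.symm u, ?_⟩
  have h : e.symm (e (G (e.symm u))) = e.symm (e b) := congrArg e.symm hu
  simp only [LinearIsometryEquiv.symm_apply_apply] at h
  exact h
end Transport

/-- the drift-implicit Euler Galerkin map `F̂ = Id + τA - τF`, with `A`
linear and coercive and `F` continuous one-sided Lipschitz, is expanding, bijective,
and open, provided `(K₁ - λ₁)τ < 1`. -/
theorem dieg_map_bijective_open {V : Type*}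
    [NormedAddCommGroup V] [InnerProductSpace ℝ V] [FiniteDimensional ℝ V]
    (A : V →ₗ[ℝ] V) (F : V → V) (lam₁ K₁ τ : ℝ) (hlam : 0 < lam₁)
    (hA : ∀ x : V, ⟪A x, x⟫ ≥ lam₁ * ‖x‖ ^ 2)
    (hF : Continuous F)
    (hK : ∀ x y : V, ⟪x - y, F x - F y⟫ ≤ K₁ * ‖x - y‖ ^ 2)
    (hτ : 0 < τ) (hstep : (K₁ - lam₁) * τ < 1) :
    (∀ x y : V,
        ‖(x + τ • A x - τ • F x) - (y + τ • A y - τ • F y)‖ ≥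
          (1 - K₁ * τ + lam₁ * τ) * ‖x - y‖) ∧
      Function.Bijective (fun x : V => x + τ • A x - τ • F x) ∧
      IsOpenMap (fun x : V => x + τ • A x - τ • F x) := by
  set G : V → V := fun x => x + τ • A x - τ • F x with hG
  set c : ℝ := 1 - K₁ * τ + lam₁ * τ with hc
  have hcpos : 0 < c := by
    have : (K₁ - lam₁) * τ = K₁ * τ - lam₁ * τ := by ring
    rw [this] at hstep
    simp only [hc]; linarith
  have hmono : ∀ x y : V, c * ‖x - y‖ ^ 2 ≤ ⟪G x - G y, x - y⟫ := by
    intro x y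
    have hd : G x - G y = (x - y) + τ • A (x - y) - τ • (F x - F y) := by
      simp only [hG, map_sub, smul_sub]
      abel
    rw [hd]
    have hi : ⟪(x - y) + τ • A (x - y) - τ • (F x - F y), x - y⟫
        = ⟪x - y, x - y⟫ + τ * ⟪A (x - y), x - y⟫ - τ * ⟪F x - F y, x - y⟫ := by
      rw [inner_sub_left, inner_add_left, real_inner_smul_left, real_inner_smul_left]
    rw [hi, real_inner_self_eq_norm_sq]
    have h1 := hA (x - y)
    have h2 : ⟪F x - F y, x - y⟫ ≤ K₁ * ‖x - y‖ ^ 2 := by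
      rw [real_inner_comm]; exact hK x y
    nlinarith [h1, h2]
  have hGc : Continuous G := by
    have hAc : Continuous fun x : V => A x := A.continuous_of_finiteDimensional
    exact ((continuous_id.add (hAc.const_smul τ)).sub (hF.const_smul τ))
  have hexp : ∀ x y : V, c * ‖x - y‖ ≤ ‖G x - G y‖ := expand_of_mono hcpos hmono
  have hinj : Function.Injective G := injective_of_mono hcpos hmono
  have hsurj : Function.Surjective G := surjective_of_continuous_mono hcpos hGc hmono
  have hbij : Function.Bijective G := ⟨hinj, hsurj⟩
  refine ⟨fun x y => ge_iff_le.mpr (hexp x y), hbij, ?_⟩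
  -- openness: the inverse is Lipschitz, hence continuous
  set eqv := Equiv.ofBijective G hbij with heqv
  have hlip : Continuous eqv.symm := by
    rw [Metric.continuous_iff]
    intro a ε hε
    refine ⟨c * ε, by positivity, fun b hb => ?_⟩
    have h1 := hexp (eqv.symm b) (eqv.symm a)
    have h2 : G (eqv.symm b) = b := eqv.apply_symm_apply b
    have h3 : G (eqv.symm a) = a := eqv.apply_symm_apply a
    rw [h2, h3] at h1
    rw [dist_eq_norm] at hb ⊢
    nlinarith [h1, hb, norm_nonneg (eqv.symm b - eqv.symm a)]
  intro U hU
  have himg : G '' U = eqv.symm ⁻¹' U := by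
    ext z
    constructor
    · rintro ⟨w, hw, rfl⟩
      show eqv.symm (G w) ∈ U
      have : eqv.symm (G w) = w := eqv.symm_apply_apply w
      rwa [this]
    · intro hz
      exact ⟨eqv.symm z, hz, eqv.apply_symm_apply z⟩
  rw [himg]
  exact hU.preimage hlip
end

section
/- Let V be a real inner product space, A : V → V a linear map with ⟨Ay, y⟩ ≥ λ₁‖y‖² for all y ∈ V for some λ₁ > 0, and F : V → V a map satisfying ⟨y, F(y)⟩ ≤ K₂‖y‖² + K₃ for all y ∈ V, where K₂ ∈ ℝ and K₃ ≥ 0. Let τ > 0, let ε satisfy 0 < ε < λ₁ and ε < λ₁ − K₂, let x, g ∈ V, and suppose y ∈ V satisfies the implicit one-step relation y + τAy − τF(y) = x + g. Then (1 + 2(λ₁ − K₂ − ε)τ)‖y‖² + (2ε/λ₁)τ⟨Ay, y⟩ ≤ ‖x‖² + ‖g‖² + 2⟨x, g⟩ + 2K₃τ. -/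
open MeasureTheory Filter
local notation "⟪" x ", " y "⟫" => @inner ℝ _ _ x y

/-- deterministic one-step energy estimate for the drift-implicit
Euler Galerkin scheme: if `y + τAy - τF(y) = x + g` then
`(1 + 2(λ₁-K₂-ε)τ)‖y‖² + (2ε/λ₁)τ⟨Ay, y⟩ ≤ ‖x‖² + ‖g‖² + 2⟨x,g⟩ + 2K₃τ`. -/
theorem dieg_one_step_estimate {V : Type*}
    [NormedAddCommGroup V] [InnerProductSpace ℝ V]
    (A : V →ₗ[ℝ] V) (F : V → V) (lam₁ K₂ K₃ : ℝ) (hlam : 0 < lam₁) (hK₃ : 0 ≤ K₃)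
    (hA : ∀ y : V, ⟪A y, y⟫ ≥ lam₁ * ‖y‖ ^ 2)
    (hF : ∀ y : V, ⟪y, F y⟫ ≤ K₂ * ‖y‖ ^ 2 + K₃)
    (τ ε : ℝ) (hτ : 0 < τ) (hε₀ : 0 < ε) (hε₁ : ε < lam₁) (hε₂ : ε < lam₁ - K₂)
    (x g y : V) (hy : y + τ • A y - τ • F y = x + g) :
    (1 + 2 * (lam₁ - K₂ - ε) * τ) * ‖y‖ ^ 2 + (2 * ε / lam₁) * τ * ⟪A y, y⟫ ≤
      ‖x‖ ^ 2 + ‖g‖ ^ 2 + 2 * ⟪x, g⟫ + 2 * K₃ * τ := by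
  have key : ⟪x + g, y⟫ = ‖y‖ ^ 2 + τ * ⟪A y, y⟫ - τ * ⟪y, F y⟫ := by
    rw [← hy, inner_sub_left, inner_add_left, real_inner_smul_left, real_inner_smul_left,
      real_inner_self_eq_norm_sq, real_inner_comm (F y) y]
  have h2 : 2 * ⟪x + g, y⟫ ≤ ‖x + g‖ ^ 2 + ‖y‖ ^ 2 := by
    nlinarith [real_inner_le_norm (x + g) y, sq_nonneg (‖x + g‖ - ‖y‖)]
  have hxg : ‖x + g‖ ^ 2 = ‖x‖ ^ 2 + ‖g‖ ^ 2 + 2 * ⟪x, g⟫ := by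
    rw [norm_add_sq_real]; ring
  have hAy := hA y
  have hFy := hF y
  have hdiv : ε / lam₁ * lam₁ = ε := div_mul_cancel₀ ε hlam.ne'
  have hcoef : 0 ≤ 1 - ε / lam₁ := by
    have := (div_lt_one hlam).mpr hε₁; linarith
  have main : ‖y‖ ^ 2 + 2 * τ * ⟪A y, y⟫ ≤ ‖x + g‖ ^ 2 + 2 * τ * K₂ * ‖y‖ ^ 2 + 2 * τ * K₃ := by
    nlinarith [mul_le_mul_of_nonneg_left hFy (by positivity : (0:ℝ) ≤ 2 * τ)]
  have hc : 2 * τ * (1 - ε / lam₁) * (lam₁ * ‖y‖ ^ 2) ≤ 2 * τ * (1 - ε / lam₁) * ⟪A y, y⟫ :=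
    mul_le_mul_of_nonneg_left hAy (by nlinarith)
  have e1 : 2 * τ * (1 - ε / lam₁) * (lam₁ * ‖y‖ ^ 2) = 2 * τ * (lam₁ - ε) * ‖y‖ ^ 2 := by
    field_simp
  have e2 : 2 * τ * (1 - ε / lam₁) * ⟪A y, y⟫ = 2 * τ * ⟪A y, y⟫ - 2 * ε / lam₁ * τ * ⟪A y, y⟫ := by
    field_simp
  linarith [main, hc, e1, e2]
end
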